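/- Let G be a finite non-cyclic nilpotent group. Then the enhanced power graph P_E(G) is minimally edge connected if and only if G is a p-group of exponent p for some prime p. -/

import Mathlib

/-- The degree of a vertex: the number of its neighbours. -/
noncomputable def gDeg {V : Type*} (G : SimpleGraph V) (v : V) : ℕ :=
  (G.neighborSet v).ncard

/-- The minimum degree of a graph. -/
noncomputable def minDeg {V : Type*} (G : SimpleGraph V) : ℕ :=
  sInf (Set.range (gDeg G))

/-- The edge connectivity: the minimum size of a set of edges whose removal
disconnects the graph. -/
noncomputable def edgeConn {V : Type*} (G : SimpleGraph V) : ℕ :=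
  sInf {n : ℕ | ∃ S : Set (Sym2 V), S ⊆ G.edgeSet ∧ S.ncard = n ∧
    ¬ (G.deleteEdges S).Connected}

/-- The vertex connectivity: the minimum size of a set of vertices whose removal
disconnects the graph or leaves a single vertex. -/
noncomputable def vertexConn {V : Type*} (G : SimpleGraph V) : ℕ :=
  sInf {n : ℕ | ∃ S : Set V, S.ncard = n ∧ Sᶜ.Nonempty ∧
    (¬ (G.induce Sᶜ).Preconnected ∨ Sᶜ.ncard = 1)}

/-- A graph is minimally edge connected if deleting any edge decreases the
edge connectivity by one. -/
def MinEdgeConnected {V : Type*} (G : SimpleGraph V) : Prop :=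
  ∀ e ∈ G.edgeSet, edgeConn (G.deleteEdges {e}) = edgeConn G - 1

/-- A graph is minimally connected if deleting any edge decreases the
vertex connectivity by one. -/
def MinConnected {V : Type*} (G : SimpleGraph V) : Prop :=
  ∀ e ∈ G.edgeSet, vertexConn (G.deleteEdges {e}) = vertexConn G - 1

/-- The power graph of a group: distinct `x, y` are adjacent iff one is a
natural power of the other. -/
def powerGraph (G : Type*) [Group G] : SimpleGraph G :=
  SimpleGraph.fromRel (fun x y => ∃ m : ℕ, y = x ^ m)

/-- The enhanced power graph of a group: distinct `x, y` are adjacent iff they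
lie in a common cyclic subgroup. -/
def enhancedPowerGraph (G : Type*) [Group G] : SimpleGraph G :=
  SimpleGraph.fromRel
    (fun x y => ∃ z : G, x ∈ Subgroup.zpowers z ∧ y ∈ Subgroup.zpowers z)

/-- The order superpower graph of a group: distinct `x, y` are adjacent iff the
order of one divides the order of the other. -/
def superpowerGraph (G : Type*) [Group G] : SimpleGraph G :=
  SimpleGraph.fromRel (fun x y => orderOf x ∣ orderOf y)


/-! The identity is a universal vertex of `enhancedPowerGraph G`. In a finite graph with a
universal vertex `u` the edge connectivity equals the minimum degree `δ`, and deleting an edge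
`s(u, y)` with `deg y > δ` does not lower it; so such a graph is minimally edge connected iff all
vertices other than `u` have the same degree `d`.

For the group, equal degrees make every maximal cyclic subgroup `⟨s⟩` (necessarily of order
`d + 1`) the closed neighbourhood `N[y]` of each of its non-identity elements `y`. A central
element `c` of prime order `q` (it exists by nilpotency) lies in `N[x]` for every `x` unless
`d + 1 ∣ q`; otherwise `G` would be the cyclic group `N[c]`. Hence `d + 1 = q` and every
non-identity element has order `q`. -/

namespace SimpleGraph

variable {V : Type*} (Γ : SimpleGraph V)

def closedNeighborSet (v : V) : Set V := insert v (Γ.neighborSet v)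

lemma ncard_closedNeighborSet [Finite V] (v : V) :
    (Γ.closedNeighborSet v).ncard = gDeg Γ v + 1 :=
  Set.ncard_insert_of_notMem Γ.notMem_neighborSet_self

lemma minDeg_le_gDeg (v : V) : minDeg Γ ≤ gDeg Γ v :=
  Nat.sInf_le ⟨v, rfl⟩

lemma exists_gDeg_eq_minDeg [Nonempty V] : ∃ v, gDeg Γ v = minDeg Γ :=
  Nat.sInf_mem (Set.range_nonempty _)

lemma neighborSet_deleteEdges_singleton {v w : V} :
    (Γ.deleteEdges {s(v, w)}).neighborSet v = Γ.neighborSet v \ {w} := by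
  ext b
  simp only [mem_neighborSet, deleteEdges_adj, Set.mem_singleton_iff, Set.mem_sdiff,
    Sym2.eq_iff, true_and, and_congr_right_iff]
  intro hvb
  refine ⟨fun h hb => h (Or.inl hb), fun hbw => ?_⟩
  rintro (hb | ⟨-, hbv⟩)
  exacts [hbw hb, hvb.ne hbv.symm]

lemma gDeg_deleteEdges_singleton [Finite V] {v w : V} (h : Γ.Adj v w) :
    gDeg (Γ.deleteEdges {s(v, w)}) v = gDeg Γ v - 1 := by
  rw [gDeg, neighborSet_deleteEdges_singleton, Set.ncard_sdiff_singleton_of_mem (by exact h), gDeg]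

lemma ncard_incidenceSet (v : V) : (Γ.incidenceSet v).ncard = gDeg Γ v := by
  classical
  rw [gDeg, ← Nat.card_coe_set_eq, ← Nat.card_coe_set_eq,
    Nat.card_congr (Γ.incidenceSetEquivNeighborSet v)]

lemma not_connected_deleteEdges_incidenceSet [Nontrivial V] (v : V) :
    ¬ (Γ.deleteEdges (Γ.incidenceSet v)).Connected := by
  intro hconn
  obtain ⟨w, hw⟩ := exists_ne v
  obtain ⟨walk⟩ := hconn.preconnected v w
  cases walk with
  | nil => exact hw rfl
  | cons hadj _ =>
    rw [deleteEdges_adj] at hadj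
    exact hadj.2 ((Γ.mem_incidenceSet _ _).mpr hadj.1)

lemma edgeConn_le {S : Set (Sym2 V)} (hS : S ⊆ Γ.edgeSet)
    (h : ¬ (Γ.deleteEdges S).Connected) : edgeConn Γ ≤ S.ncard :=
  Nat.sInf_le ⟨S, hS, rfl, h⟩

lemma edgeConn_le_gDeg [Nontrivial V] (v : V) : edgeConn Γ ≤ gDeg Γ v :=
  Γ.ncard_incidenceSet v ▸
    Γ.edgeConn_le (Γ.incidenceSet_subset v) (Γ.not_connected_deleteEdges_incidenceSet v)

lemma le_edgeConn [Nontrivial V] {n : ℕ}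
    (h : ∀ S ⊆ Γ.edgeSet, ¬ (Γ.deleteEdges S).Connected → n ≤ S.ncard) :
    n ≤ edgeConn Γ := by
  obtain ⟨v⟩ := ‹Nontrivial V›.to_nonempty
  refine le_csInf ⟨_, _, Γ.incidenceSet_subset v, rfl,
    Γ.not_connected_deleteEdges_incidenceSet v⟩ ?_
  rintro _ ⟨S, hS, rfl, hdisc⟩
  exact h S hS hdisc

lemma edgeConn_le_edgeConn_deleteEdges_add_one [Nontrivial V] {e : Sym2 V}
    (he : e ∈ Γ.edgeSet) : edgeConn Γ ≤ edgeConn (Γ.deleteEdges {e}) + 1 := by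
  obtain ⟨v⟩ := ‹Nontrivial V›.to_nonempty
  obtain ⟨S, hS, hcard, hdisc⟩ : edgeConn (Γ.deleteEdges {e}) ∈ _ :=
    Nat.sInf_mem ⟨_, _, incidenceSet_subset _ v, rfl,
      not_connected_deleteEdges_incidenceSet _ v⟩
  rw [deleteEdges_deleteEdges] at hdisc
  have hsub : {e} ∪ S ⊆ Γ.edgeSet :=
    Set.union_subset (Set.singleton_subset_iff.mpr he)
      (hS.trans (Γ.edgeSet_deleteEdges {e} ▸ Set.sdiff_subset))
  calc edgeConn Γ ≤ ({e} ∪ S).ncard := Γ.edgeConn_le hsub hdisc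
    _ ≤ S.ncard + 1 := by rw [Set.singleton_union]; exact Set.ncard_insert_le e S
    _ = edgeConn (Γ.deleteEdges {e}) + 1 := by rw [hcard]

/-- Take `C` to be the vertices not reachable from `u` once `T` is deleted. -/
lemma exists_forall_adj_mem_of_not_connected (u : V) {T : Set (Sym2 V)}
    (h : ¬ (Γ.deleteEdges T).Connected) :
    ∃ C : Set V, C.Nonempty ∧ u ∉ C ∧ ∀ a ∈ C, ∀ b ∉ C, Γ.Adj a b → s(a, b) ∈ T := by
  refine ⟨{v | ¬ (Γ.deleteEdges T).Reachable u v}, ?_, fun hu => hu .rfl, ?_⟩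
  · by_contra hempty
    simp only [Set.not_nonempty_iff_eq_empty, Set.eq_empty_iff_forall_notMem,
      Set.mem_ofPred_eq, not_not] at hempty
    exact h ((connected_iff _).mpr ⟨fun a b => (hempty a).symm.trans (hempty b), ⟨u⟩⟩)
  · intro a ha b hb hab
    by_contra habT
    have hba : (Γ.deleteEdges T).Adj b a := deleteEdges_adj.mpr ⟨hab.symm, by rwa [Sym2.eq_swap]⟩
    exact ha ((not_not.mp hb).trans hba.reachable)

section UniversalVertex

variable [Finite V] {Γ} {u : V}

/-- Each neighbour `b` of `y` yields its own edge leaving `C`: `s(y, b)` if `b ∉ C`,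
and `s(b, u)` if `b ∈ C`. -/
lemma IsUniversal.gDeg_le_ncard (hu : Γ.IsUniversal u) {C : Set V} {T : Set (Sym2 V)}
    (huC : u ∉ C) (hT : ∀ a ∈ C, ∀ b ∉ C, Γ.Adj a b → s(a, b) ∈ T) {y : V} (hyC : y ∈ C) :
    gDeg Γ y ≤ T.ncard := by
  classical
  have hne : ∀ {a}, a ∈ C → u ≠ a := fun ha hua => huC (hua ▸ ha)
  refine Set.ncard_le_ncard_of_injOn (fun b => if b ∈ C then s(b, u) else s(y, b)) ?_ ?_
  · intro b hb
    by_cases hbC : b ∈ C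
    · simpa [hbC] using hT b hbC u huC (hu (hne hbC)).symm
    · simpa [hbC] using hT y hyC b hbC hb
  · intro b hb b' hb' hbb'
    by_cases hbC : b ∈ C <;> by_cases hb'C : b' ∈ C <;>
      simp only [hbC, hb'C, if_true, if_false, Sym2.eq_iff] at hbb'
    · rcases hbb' with ⟨h, -⟩ | ⟨h, -⟩
      exacts [h, (hne hbC h.symm).elim]
    · rcases hbb' with ⟨h, -⟩ | ⟨-, h⟩
      exacts [(hb.ne h.symm).elim, (hne hyC h).elim]
    · rcases hbb' with ⟨h, -⟩ | ⟨h, -⟩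
      exacts [(hb'.ne h).elim, (hne hyC h.symm).elim]
    · rcases hbb' with ⟨-, h⟩ | ⟨h, h'⟩
      exacts [h, h'.symm ▸ h ▸ rfl]

lemma IsUniversal.edgeConn_eq_minDeg [Nontrivial V] (hu : Γ.IsUniversal u) :
    edgeConn Γ = minDeg Γ := by
  obtain ⟨v, hv⟩ := Γ.exists_gDeg_eq_minDeg
  refine le_antisymm (hv ▸ Γ.edgeConn_le_gDeg v) (Γ.le_edgeConn fun S _ hdisc => ?_)
  obtain ⟨C, ⟨y, hyC⟩, huC, hT⟩ := Γ.exists_forall_adj_mem_of_not_connected u hdisc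
  exact (Γ.minDeg_le_gDeg y).trans (hu.gDeg_le_ncard huC hT hyC)

lemma IsUniversal.minDeg_le_edgeConn_deleteEdges [Nontrivial V] (hu : Γ.IsUniversal u) {y : V}
    (hy : minDeg Γ < gDeg Γ y) : minDeg Γ ≤ edgeConn (Γ.deleteEdges {s(u, y)}) := by
  refine le_edgeConn _ fun S _ hdisc => ?_
  rw [deleteEdges_deleteEdges] at hdisc
  obtain ⟨C, ⟨y', hy'C⟩, huC, hT⟩ := Γ.exists_forall_adj_mem_of_not_connected u hdisc
  by_cases hyC : y ∈ C
  · have := hu.gDeg_le_ncard huC hT hyC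
    have : ({s(u, y)} ∪ S).ncard ≤ S.ncard + 1 := by
      rw [Set.singleton_union]; exact Set.ncard_insert_le _ _
    omega
  · have hST : ∀ a ∈ C, ∀ b ∉ C, Γ.Adj a b → s(a, b) ∈ S := by
      intro a ha b hb hab
      refine (hT a ha b hb hab).resolve_left fun h => ?_
      rcases Sym2.eq_iff.mp h with ⟨rfl, -⟩ | ⟨rfl, -⟩
      exacts [huC ha, hyC ha]
    exact (Γ.minDeg_le_gDeg y').trans (hu.gDeg_le_ncard huC hST hy'C)

lemma IsUniversal.gDeg_le_gDeg (hu : Γ.IsUniversal u) (v : V) : gDeg Γ v ≤ gDeg Γ u := by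
  have hsub : Γ.neighborSet v ⊆ {v}ᶜ := fun _ hw h => Γ.notMem_neighborSet_self (h ▸ hw)
  calc gDeg Γ v ≤ ({v}ᶜ : Set V).ncard := Set.ncard_le_ncard hsub
    _ = gDeg Γ u := by rw [gDeg, hu.neighborSet_eq, Set.ncard_compl, Set.ncard_compl,
        Set.ncard_singleton, Set.ncard_singleton]

lemma IsUniversal.minDeg_pos [Nontrivial V] (hu : Γ.IsUniversal u) : 0 < minDeg Γ := by
  obtain ⟨v, hv⟩ := Γ.exists_gDeg_eq_minDeg
  obtain ⟨w, hw⟩ := exists_ne v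
  have hadj : ∃ b, Γ.Adj v b := by
    by_cases hvu : v = u
    · subst hvu
      exact ⟨w, hu (Ne.symm hw)⟩
    · exact ⟨u, (hu (Ne.symm hvu)).symm⟩
  obtain ⟨b, hb⟩ := hadj
  exact hv ▸ (Set.ncard_pos).mpr ⟨b, hb⟩

lemma IsUniversal.minEdgeConnected_iff [Nontrivial V] (hu : Γ.IsUniversal u) :
    MinEdgeConnected Γ ↔ ∃ d, ∀ v, v ≠ u → gDeg Γ v = d := by
  constructor
  · refine fun h => ⟨minDeg Γ, fun v hvu => ?_⟩
    by_contra hne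
    have hlt : minDeg Γ < gDeg Γ v := lt_of_le_of_ne (Γ.minDeg_le_gDeg v) (Ne.symm hne)
    have hle := hu.minDeg_le_edgeConn_deleteEdges hlt
    rw [h _ (Γ.mem_edgeSet.mpr (hu (Ne.symm hvu))), hu.edgeConn_eq_minDeg] at hle
    have := hu.minDeg_pos
    omega
  · rintro ⟨d, hd⟩
    have hdmin : d = minDeg Γ := by
      obtain ⟨v, hv⟩ := Γ.exists_gDeg_eq_minDeg
      obtain ⟨w, hwu⟩ := exists_ne u
      by_cases hvu : v = u
      · have := hu.gDeg_le_gDeg w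
        have := Γ.minDeg_le_gDeg w
        have := hd w hwu
        subst hvu
        omega
      · rw [← hd v hvu, hv]
    intro e he
    induction e with | h a b =>
    have hdelete : ∀ x w, Γ.Adj x w → x ≠ u →
        edgeConn (Γ.deleteEdges {s(x, w)}) = edgeConn Γ - 1 := by
      intro x w hxw hxu
      have hdeg := Γ.gDeg_deleteEdges_singleton hxw
      have hle := (Γ.deleteEdges {s(x, w)}).edgeConn_le_gDeg x
      have hge := Γ.edgeConn_le_edgeConn_deleteEdges_add_one (Γ.mem_edgeSet.mpr hxw)
      rw [hu.edgeConn_eq_minDeg, ← hdmin] at hge ⊢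
      rw [hdeg, hd x hxu] at hle
      omega
    rw [mem_edgeSet] at he
    by_cases hau : a = u
    · rw [Sym2.eq_swap]
      exact hdelete b a he.symm (hau ▸ he.ne.symm)
    · exact hdelete a b he hau

end UniversalVertex

end SimpleGraph

section EnhancedPowerGraph

open Subgroup

variable {G : Type*} [Group G]

lemma enhancedPowerGraph_adj {x y : G} :
    (enhancedPowerGraph G).Adj x y ↔ x ≠ y ∧ ∃ z : G, x ∈ zpowers z ∧ y ∈ zpowers z := by
  rw [enhancedPowerGraph, SimpleGraph.fromRel_adj,
    or_iff_left_of_imp fun ⟨z, hy, hx⟩ => ⟨z, hx, hy⟩]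

lemma isUniversal_one_enhancedPowerGraph : (enhancedPowerGraph G).IsUniversal 1 :=
  fun x hx => enhancedPowerGraph_adj.mpr ⟨hx, x, one_mem _, mem_zpowers x⟩

lemma mem_closedNeighborSet_enhancedPowerGraph {v w : G} :
    w ∈ (enhancedPowerGraph G).closedNeighborSet v ↔
      ∃ z : G, v ∈ zpowers z ∧ w ∈ zpowers z := by
  rw [SimpleGraph.closedNeighborSet, Set.mem_insert_iff, SimpleGraph.mem_neighborSet,
    enhancedPowerGraph_adj]
  constructor
  · rintro (rfl | ⟨-, hz⟩)
    exacts [⟨w, mem_zpowers w, mem_zpowers w⟩, hz]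
  · intro hz
    by_cases hwv : w = v
    exacts [.inl hwv, .inr ⟨Ne.symm hwv, hz⟩]

lemma zpowers_subset_closedNeighborSet {v z : G} (hv : v ∈ zpowers z) :
    (zpowers z : Set G) ⊆ (enhancedPowerGraph G).closedNeighborSet v :=
  fun _ hw => mem_closedNeighborSet_enhancedPowerGraph.mpr ⟨z, hv, hw⟩

variable [Finite G]

lemma closedNeighborSet_enhancedPowerGraph_eq_zpowers {v : G}
    (hmax : ∀ z : G, v ∈ zpowers z → orderOf z ≤ orderOf v) :
    (enhancedPowerGraph G).closedNeighborSet v = zpowers v := by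
  refine subset_antisymm (fun w hw => ?_) (zpowers_subset_closedNeighborSet (mem_zpowers v))
  obtain ⟨z, hvz, hwz⟩ := mem_closedNeighborSet_enhancedPowerGraph.mp hw
  have : zpowers v = zpowers z := eq_of_le_of_card_ge (zpowers_le.mpr hvz)
    (by rw [Nat.card_zpowers, Nat.card_zpowers]; exact hmax z hvz)
  exact this ▸ hwz

lemma gDeg_enhancedPowerGraph_add_one {v : G}
    (hmax : ∀ z : G, v ∈ zpowers z → orderOf z ≤ orderOf v) :
    gDeg (enhancedPowerGraph G) v + 1 = orderOf v := by
  rw [← SimpleGraph.ncard_closedNeighborSet,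
    closedNeighborSet_enhancedPowerGraph_eq_zpowers hmax, ← Nat.card_coe_set_eq,
    SetLike.coe_sort_coe, Nat.card_zpowers]

end EnhancedPowerGraph

section EqualDegrees

open Subgroup

variable {G : Type*} [Group G] [Finite G] {d : ℕ}
  (hreg : ∀ x : G, x ≠ 1 → gDeg (enhancedPowerGraph G) x = d)
include hreg

/-- Take `⟨s⟩` a maximal cyclic subgroup containing `x`: it is the closed neighbourhood of `s`,
and every closed neighbourhood of a non-identity vertex has the same size `d + 1`. -/
lemma exists_zpowers_eq_closedNeighborSet {x : G} (hx : x ≠ 1) :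
    ∃ s : G, x ∈ zpowers s ∧ orderOf s = d + 1 ∧
      ∀ y ∈ zpowers s, y ≠ 1 → (enhancedPowerGraph G).closedNeighborSet y = zpowers s := by
  obtain ⟨s, hxs, hmax⟩ := Set.exists_max_image {s : G | x ∈ zpowers s} orderOf
    (Set.toFinite _) ⟨x, mem_zpowers x⟩
  have hs1 : s ≠ 1 := by
    rintro rfl
    exact hx (by simpa using hxs)
  have hords : orderOf s = d + 1 := by
    rw [← gDeg_enhancedPowerGraph_add_one fun z hz => hmax z (zpowers_le.mpr hz hxs), hreg s hs1]
  refine ⟨s, hxs, hords, fun y hy hy1 => ?_⟩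
  refine (Set.eq_of_subset_of_ncard_le (zpowers_subset_closedNeighborSet hy) ?_).symm
  rw [SimpleGraph.ncard_closedNeighborSet, hreg y hy1, ← hords, ← Nat.card_zpowers,
    ← Nat.card_coe_set_eq, SetLike.coe_sort_coe]

/-- Writing `N[x] = ⟨s⟩` and `k = orderOf c`: `(c * s) ^ k = s ^ k ≠ 1`, so `c * s` lies in
`N[s ^ k] = ⟨s⟩`. -/
lemma mem_closedNeighborSet_of_mem_center {c x : G} (hc : c ∈ center G)
    (hcd : ¬ d + 1 ∣ orderOf c) (hx : x ≠ 1) :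
    c ∈ (enhancedPowerGraph G).closedNeighborSet x := by
  obtain ⟨s, hxs, hords, hnbhd⟩ := exists_zpowers_eq_closedNeighborSet hreg hx
  set k := orderOf c
  have hsk : s ^ k ≠ 1 := by rwa [Ne, ← orderOf_dvd_iff_pow_eq_one, hords]
  have hcsk : (c * s) ^ k = s ^ k := by
    rw [Commute.mul_pow (mem_center_iff.mp hc s).symm, pow_orderOf_eq_one, one_mul]
  have hcs : c * s ∈ zpowers s := by
    rw [← SetLike.mem_coe, ← hnbhd (s ^ k) (pow_mem (mem_zpowers s) k) hsk]
    exact zpowers_subset_closedNeighborSet (hcsk ▸ pow_mem (mem_zpowers _) k) (mem_zpowers _)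
  rw [hnbhd x hxs hx]
  simpa using mul_mem hcs (inv_mem (mem_zpowers s))

lemma isCyclic_of_mem_center {c : G} (hc : c ∈ center G) (hc1 : c ≠ 1)
    (hcd : ¬ d + 1 ∣ orderOf c) : IsCyclic G := by
  obtain ⟨s, hcs, -, hnbhd⟩ := exists_zpowers_eq_closedNeighborSet hreg hc1
  refine ⟨s, fun g => mem_zpowers_iff.mp ?_⟩
  by_cases hg : g = 1
  · exact hg ▸ one_mem _
  obtain ⟨z, hgz, hcz⟩ := mem_closedNeighborSet_enhancedPowerGraph.mp
    (mem_closedNeighborSet_of_mem_center hreg hc hcd hg)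
  have : g ∈ (enhancedPowerGraph G).closedNeighborSet c :=
    mem_closedNeighborSet_enhancedPowerGraph.mpr ⟨z, hcz, hgz⟩
  rwa [hnbhd c hcs hc1] at this

lemma exists_prime_forall_orderOf_eq (hnil : Group.IsNilpotent G) (hnc : ¬ IsCyclic G) :
    ∃ p : ℕ, p.Prime ∧ ∀ x : G, x ≠ 1 → orderOf x = p := by
  have : Nontrivial G := not_subsingleton_iff_nontrivial.mp fun _ => hnc inferInstance
  obtain ⟨c₀, hc₀1⟩ := ne_bot_iff_exists_ne_one.mp (Group.IsNilpotent.center_ne_bot G)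
  obtain ⟨q, hq, hqdvd⟩ := Nat.exists_prime_and_dvd (orderOf_eq_one_iff.not.mpr hc₀1)
  have := Fact.mk hq
  obtain ⟨⟨c, hc⟩, hordc⟩ :=
    exists_prime_orderOf_dvd_card' q (hqdvd.trans (orderOf_dvd_natCard c₀))
  rw [orderOf_mk] at hordc
  have hc1 : c ≠ 1 := by
    rintro rfl
    exact hq.one_lt.ne (orderOf_one.symm.trans hordc)
  have hdq : d + 1 ∣ q := by
    by_contra h
    exact hnc (isCyclic_of_mem_center hreg hc hc1 (hordc ▸ h))
  refine ⟨q, hq, fun x hx => ?_⟩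
  obtain ⟨s, hxs, hords, -⟩ := exists_zpowers_eq_closedNeighborSet hreg hx
  have hxq : orderOf x ∣ q := (hords ▸ orderOf_dvd_of_mem_zpowers hxs).trans hdq
  exact (hq.eq_one_or_self_of_dvd _ hxq).resolve_left (orderOf_eq_one_iff.not.mpr hx)

end EqualDegrees

/-- For a finite non-cyclic nilpotent group `G`, the enhanced power
graph is minimally edge connected iff `G` is a `p`-group of exponent `p` for some
prime `p`. -/
theorem stmt_3 (G : Type*) [Group G] [Fintype G] (hnil : Group.IsNilpotent G)
    (hnc : ¬ IsCyclic G) :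
    MinEdgeConnected (enhancedPowerGraph G) ↔
      ∃ p : ℕ, p.Prime ∧ (∃ n : ℕ, Nat.card G = p ^ n) ∧ Monoid.exponent G = p := by
  have : Nontrivial G := not_subsingleton_iff_nontrivial.mp fun _ => hnc inferInstance
  rw [isUniversal_one_enhancedPowerGraph.minEdgeConnected_iff]
  constructor
  · rintro ⟨d, hreg⟩
    obtain ⟨p, hp, hord⟩ := exists_prime_forall_orderOf_eq hreg hnil hnc
    have := Fact.mk hp
    have hexp := (Monoid.exponent_eq_prime_iff hp).mpr hord
    exact ⟨p, hp, IsPGroup.iff_card.mp (.of_exponent_dvd_pow (n := 1) (by simp [hexp])), hexp⟩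
  · rintro ⟨p, hp, -, hexp⟩
    have hord := (Monoid.exponent_eq_prime_iff hp).mp hexp
    refine ⟨p - 1, fun x hx => ?_⟩
    have := gDeg_enhancedPowerGraph_add_one (v := x) fun z hxz =>
      (hord z fun hz => hx (by simpa [hz] using hxz)).trans (hord x hx).symm |>.le
    rw [hord x hx] at this
    omega
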